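/- arXiv:1512.04069 — 4 statements merged into one kernel-verified Lean document; each statement's English description precedes it below -/
import Mathlib

section
/- Let p > 1 and let q satisfy 1/p + 1/q = 1, let σ ∈ ℝ, and let h and f be nonnegative Lebesgue-measurable functions on (0,∞) such that k(σ) := ∫₀^∞ h(t) t^{σ-1} dt satisfies 0 < k(σ) < ∞. Then ∫₀^∞ y^{pσ-1} (∫₀^∞ h(x·y) f(x) dx)^p dy ≤ k(σ)^p · ∫₀^∞ x^{p(1-σ)-1} f(x)^p dx, as an inequality in [0,∞]. -/
/-!
Apply Hölder's inequality to `h(xy) f(x) = (h(xy)^{1/p} x^{(1-σ)/q} f(x)) · (h(xy)^{1/q} x^{(σ-1)/q})`.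
The substitution `t = xy` turns the `q`-th power integral of the second factor into `y^{-σ} k(σ)`,
which cancels the weight `y^{pσ-1}` up to `y^{σ-1}`; after Tonelli, the same substitution in `y`
produces the remaining factor `k(σ)`.
-/

open MeasureTheory Set
open scoped ENNReal

theorem ENNReal.ofReal_rpow_mul_ofReal_rpow {x : ℝ} (hx : 0 < x) (a b : ℝ) :
    ENNReal.ofReal (x ^ a) * ENNReal.ofReal (x ^ b) = ENNReal.ofReal (x ^ (a + b)) := by
  rw [← ENNReal.ofReal_mul (by positivity), Real.rpow_add hx]

noncomputable def lmellin (H : ℝ → ℝ≥0∞) (s : ℝ) : ℝ≥0∞ :=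
  ∫⁻ t in Ioi 0, ENNReal.ofReal (t ^ (s - 1)) * H t

theorem lintegral_Ioi_comp_mul_left {c : ℝ} (hc : 0 < c) (g : ℝ → ℝ≥0∞) :
    ∫⁻ x in Ioi 0, g (c * x) = ENNReal.ofReal c⁻¹ * ∫⁻ t in Ioi 0, g t := by
  have hm : Measurable fun x : ℝ => c * x := measurable_const_mul c
  have hpre : (fun x : ℝ => c * x) ⁻¹' Ioi 0 = Ioi 0 := by
    ext x; simp [mul_pos_iff_of_pos_left hc]
  calc ∫⁻ x in Ioi 0, g (c * x)
      = ∫⁻ t, g t ∂(Measure.map (c * ·) (volume.restrict (Ioi 0))) :=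
        ((MeasurableEquiv.mulLeft₀ c hc.ne').measurableEmbedding.lintegral_map _).symm
    _ = ∫⁻ t in Ioi 0, g t ∂(Measure.map (c * ·) volume) := by
        rw [Measure.restrict_map hm measurableSet_Ioi, hpre]
    _ = ENNReal.ofReal c⁻¹ * ∫⁻ t in Ioi 0, g t := by
        rw [Real.map_volume_mul_left hc.ne', Measure.restrict_smul, lintegral_smul_measure,
          abs_of_pos (inv_pos.2 hc), smul_eq_mul]

theorem lintegral_rpow_mul_comp_mul_right (H : ℝ → ℝ≥0∞) (s : ℝ) {y : ℝ} (hy : 0 < y) :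
    ∫⁻ x in Ioi 0, ENNReal.ofReal (x ^ (s - 1)) * H (x * y)
      = ENNReal.ofReal (y ^ (-s)) * lmellin H s := by
  have hpt : ∀ x ∈ Ioi (0 : ℝ), ENNReal.ofReal (x ^ (s - 1)) * H (x * y)
      = ENNReal.ofReal (y ^ (1 - s)) * (ENNReal.ofReal ((y * x) ^ (s - 1)) * H (y * x)) := by
    intro x hx
    rw [Real.mul_rpow hy.le (le_of_lt hx), ENNReal.ofReal_mul (by positivity), ← mul_assoc,
      ← mul_assoc, ENNReal.ofReal_rpow_mul_ofReal_rpow hy, mul_comm x y]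
    norm_num
  rw [setLIntegral_congr_fun measurableSet_Ioi hpt, lintegral_const_mul' _ _ ENNReal.ofReal_ne_top,
    lintegral_Ioi_comp_mul_left hy (fun t => ENNReal.ofReal (t ^ (s - 1)) * H t), lmellin,
    ← mul_assoc, ← Real.rpow_neg_one, ENNReal.ofReal_rpow_mul_ofReal_rpow hy]
  ring_nf

theorem lintegral_mul_rpow_le_weighted {α : Type*} [MeasurableSpace α] {μ : Measure α}
    {p q : ℝ} (hpq : p.HolderConjugate q) {H F w : α → ℝ≥0∞}
    (hH : AEMeasurable H μ) (hF : AEMeasurable F μ) (hw : AEMeasurable w μ)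
    (hw0 : ∀ᵐ x ∂μ, w x ≠ 0) (hwt : ∀ᵐ x ∂μ, w x ≠ ∞) :
    (∫⁻ x, H x * F x ∂μ) ^ p
      ≤ (∫⁻ x, H x * w x ^ (p / q) * F x ^ p ∂μ) * (∫⁻ x, H x * (w x)⁻¹ ∂μ) ^ (p / q) := by
  have hp := hpq.pos
  have hq := hpq.symm.pos
  set u : α → ℝ≥0∞ := fun x => H x ^ (1 / p) * w x ^ (1 / q) * F x
  set v : α → ℝ≥0∞ := fun x => H x ^ (1 / q) * (w x)⁻¹ ^ (1 / q)
  have hsplit : (fun x => H x * F x) =ᵐ[μ] u * v := by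
    filter_upwards [hw0, hwt] with x hx0 hxt
    have hH1 : H x ^ (1 / p) * H x ^ (1 / q) = H x := by
      rw [← ENNReal.rpow_add_of_nonneg _ _ (by positivity) (by positivity), one_div, one_div,
        hpq.inv_add_inv_eq_one, ENNReal.rpow_one]
    have hw1 : w x ^ (1 / q) * (w x)⁻¹ ^ (1 / q) = 1 := by
      rw [← ENNReal.mul_rpow_of_nonneg _ _ (by positivity), ENNReal.mul_inv_cancel hx0 hxt,
        ENNReal.one_rpow]
    calc H x * F x = (H x ^ (1 / p) * H x ^ (1 / q)) * (w x ^ (1 / q) * (w x)⁻¹ ^ (1 / q)) * F x := by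
          rw [hH1, hw1, mul_one]
      _ = (u * v) x := by simp only [u, v, Pi.mul_apply]; ring
  have hu : ∀ x, u x ^ p = H x * w x ^ (p / q) * F x ^ p := by
    intro x
    simp only [u, ENNReal.mul_rpow_of_nonneg _ _ hp.le, ← ENNReal.rpow_mul]
    rw [one_div_mul_cancel hp.ne', ENNReal.rpow_one, one_div_mul_eq_div]
  have hv : ∀ x, v x ^ q = H x * (w x)⁻¹ := by
    intro x
    simp only [v, ENNReal.mul_rpow_of_nonneg _ _ hq.le, ← ENNReal.rpow_mul,
      one_div_mul_cancel hq.ne', ENNReal.rpow_one]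
  have holder : ∫⁻ x, H x * F x ∂μ
      ≤ (∫⁻ x, H x * w x ^ (p / q) * F x ^ p ∂μ) ^ (1 / p) * (∫⁻ x, H x * (w x)⁻¹ ∂μ) ^ (1 / q) := by
    rw [lintegral_congr_ae hsplit]
    simp only [← hu, ← hv]
    exact ENNReal.lintegral_mul_le_Lp_mul_Lq μ hpq (by fun_prop) (by fun_prop)
  calc (∫⁻ x, H x * F x ∂μ) ^ p
      ≤ ((∫⁻ x, H x * w x ^ (p / q) * F x ^ p ∂μ) ^ (1 / p)
          * (∫⁻ x, H x * (w x)⁻¹ ∂μ) ^ (1 / q)) ^ p := ENNReal.rpow_le_rpow holder hp.le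
    _ = _ := by
        rw [ENNReal.mul_rpow_of_nonneg _ _ hp.le, ← ENNReal.rpow_mul, ← ENNReal.rpow_mul,
          one_div_mul_cancel hp.ne', ENNReal.rpow_one, one_div_mul_eq_div]

theorem lintegral_rpow_mul_lintegral_comp_mul {H G : ℝ → ℝ≥0∞} (hH : Measurable H)
    (hG : Measurable G) (s : ℝ) :
    ∫⁻ y in Ioi 0, ENNReal.ofReal (y ^ (s - 1)) * ∫⁻ x in Ioi 0, H (x * y) * G x
      = lmellin H s * ∫⁻ x in Ioi 0, ENNReal.ofReal (x ^ (-s)) * G x := by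
  have hinner : ∀ x ∈ Ioi (0 : ℝ),
      ∫⁻ y in Ioi 0, ENNReal.ofReal (y ^ (s - 1)) * (H (x * y) * G x)
        = lmellin H s * (ENNReal.ofReal (x ^ (-s)) * G x) := by
    intro x hx
    simp_rw [← mul_assoc, mul_comm x]
    rw [lintegral_mul_const _ (by fun_prop), lintegral_rpow_mul_comp_mul_right H s hx, mul_comm (ENNReal.ofReal _)]
  calc ∫⁻ y in Ioi 0, ENNReal.ofReal (y ^ (s - 1)) * ∫⁻ x in Ioi 0, H (x * y) * G x
      = ∫⁻ y in Ioi 0, ∫⁻ x in Ioi 0, ENNReal.ofReal (y ^ (s - 1)) * (H (x * y) * G x) := by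
        simp_rw [lintegral_const_mul' _ _ ENNReal.ofReal_ne_top]
    _ = ∫⁻ x in Ioi 0, ∫⁻ y in Ioi 0, ENNReal.ofReal (y ^ (s - 1)) * (H (x * y) * G x) :=
        lintegral_lintegral_swap (by fun_prop)
    _ = lmellin H s * ∫⁻ x in Ioi 0, ENNReal.ofReal (x ^ (-s)) * G x := by
        rw [setLIntegral_congr_fun measurableSet_Ioi hinner, lintegral_const_mul _ (by fun_prop)]

theorem rpow_mul_lintegral_comp_mul_rpow_le {p q : ℝ} (hpq : p.HolderConjugate q) (σ : ℝ)
    {H F : ℝ → ℝ≥0∞} (hH : Measurable H) (hF : Measurable F) {y : ℝ} (hy : 0 < y) :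
    ENNReal.ofReal (y ^ (p * σ - 1)) * (∫⁻ x in Ioi 0, H (x * y) * F x) ^ p
      ≤ lmellin H σ ^ (p / q) * (ENNReal.ofReal (y ^ (σ - 1))
          * ∫⁻ x in Ioi 0, H (x * y) * (ENNReal.ofReal (x ^ ((1 - σ) * (p - 1))) * F x ^ p)) := by
  have hpq' : p / q = p - 1 := hpq.div_conj_eq_sub_one
  have hpq0 : 0 ≤ p / q := div_nonneg hpq.pos.le hpq.symm.pos.le
  set K := lmellin H σ
  set A := ∫⁻ x in Ioi 0, H (x * y) * (ENNReal.ofReal (x ^ ((1 - σ) * (p - 1))) * F x ^ p)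
  have hw0 : ∀ᵐ x ∂volume.restrict (Ioi 0), ENNReal.ofReal (x ^ (1 - σ)) ≠ 0 := by
    filter_upwards [ae_restrict_mem measurableSet_Ioi] with x hx
    exact (ENNReal.ofReal_pos.2 (Real.rpow_pos_of_pos hx _)).ne'
  have hholder := lintegral_mul_rpow_le_weighted hpq (H := fun x => H (x * y)) (by fun_prop)
    hF.aemeasurable (by fun_prop) hw0 (ae_of_all _ fun _ => ENNReal.ofReal_ne_top)
  have hA : ∫⁻ x in Ioi 0, H (x * y) * ENNReal.ofReal (x ^ (1 - σ)) ^ (p / q) * F x ^ p = A := by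
    refine setLIntegral_congr_fun measurableSet_Ioi fun x hx => ?_
    rw [ENNReal.ofReal_rpow_of_nonneg (Real.rpow_nonneg (le_of_lt hx) _) hpq0,
      ← Real.rpow_mul (le_of_lt hx), hpq', mul_assoc]
  have hK : ∫⁻ x in Ioi 0, H (x * y) * (ENNReal.ofReal (x ^ (1 - σ)))⁻¹
      = ENNReal.ofReal (y ^ (-σ)) * K := by
    rw [← lintegral_rpow_mul_comp_mul_right H σ hy]
    refine setLIntegral_congr_fun measurableSet_Ioi fun x hx => ?_
    rw [← ENNReal.ofReal_inv_of_pos (Real.rpow_pos_of_pos hx _), ← Real.rpow_neg (le_of_lt hx),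
      neg_sub, mul_comm]
  have hexp : p * σ - 1 + -σ * (p / q) = σ - 1 := by rw [hpq']; ring
  calc ENNReal.ofReal (y ^ (p * σ - 1)) * (∫⁻ x in Ioi 0, H (x * y) * F x) ^ p
      ≤ ENNReal.ofReal (y ^ (p * σ - 1)) * (A * (ENNReal.ofReal (y ^ (-σ)) * K) ^ (p / q)) := by
        rw [← hA, ← hK]
        exact mul_le_mul_right hholder _
    _ = K ^ (p / q) * ((ENNReal.ofReal (y ^ (p * σ - 1))
          * ENNReal.ofReal (y ^ (-σ * (p / q)))) * A) := by
        rw [ENNReal.mul_rpow_of_nonneg _ _ hpq0,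
          ENNReal.ofReal_rpow_of_pos (Real.rpow_pos_of_pos hy _), ← Real.rpow_mul (le_of_lt hy)]
        ring
    _ = K ^ (p / q) * (ENNReal.ofReal (y ^ (σ - 1)) * A) := by
        rw [ENNReal.ofReal_rpow_mul_ofReal_rpow hy, hexp]

theorem lintegral_rpow_mul_lintegral_comp_mul_rpow_le {p q : ℝ} (hpq : p.HolderConjugate q)
    (σ : ℝ) {H F : ℝ → ℝ≥0∞} (hH : Measurable H) (hF : Measurable F) :
    ∫⁻ y in Ioi 0, ENNReal.ofReal (y ^ (p * σ - 1)) * (∫⁻ x in Ioi 0, H (x * y) * F x) ^ p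
      ≤ lmellin H σ ^ p * ∫⁻ x in Ioi 0, ENNReal.ofReal (x ^ (p * (1 - σ) - 1)) * F x ^ p := by
  have hpq' : p / q = p - 1 := hpq.div_conj_eq_sub_one
  set K := lmellin H σ
  set G : ℝ → ℝ≥0∞ := fun x => ENNReal.ofReal (x ^ ((1 - σ) * (p - 1))) * F x ^ p
  have hKp : K ^ (p / q) * K = K ^ p := by
    calc K ^ (p / q) * K = K ^ (p / q) * K ^ (1 : ℝ) := by rw [ENNReal.rpow_one]
      _ = K ^ p := by
        rw [← ENNReal.rpow_add_of_nonneg _ _ (div_nonneg hpq.pos.le hpq.symm.pos.le) zero_le_one,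
          hpq', sub_add_cancel]
  have hG : ∀ x ∈ Ioi (0 : ℝ), ENNReal.ofReal (x ^ (-σ)) * G x
      = ENNReal.ofReal (x ^ (p * (1 - σ) - 1)) * F x ^ p := by
    intro x hx
    rw [← mul_assoc, ENNReal.ofReal_rpow_mul_ofReal_rpow hx]
    ring_nf
  calc ∫⁻ y in Ioi 0, ENNReal.ofReal (y ^ (p * σ - 1)) * (∫⁻ x in Ioi 0, H (x * y) * F x) ^ p
      ≤ ∫⁻ y in Ioi 0, K ^ (p / q)
          * (ENNReal.ofReal (y ^ (σ - 1)) * ∫⁻ x in Ioi 0, H (x * y) * G x) :=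
        setLIntegral_mono' measurableSet_Ioi fun y hy =>
          rpow_mul_lintegral_comp_mul_rpow_le hpq σ hH hF hy
    _ = K ^ (p / q) * (K * ∫⁻ x in Ioi 0, ENNReal.ofReal (x ^ (-σ)) * G x) := by
        rw [lintegral_const_mul _ (by fun_prop),
          lintegral_rpow_mul_lintegral_comp_mul hH (by fun_prop)]
    _ = K ^ p * ∫⁻ x in Ioi 0, ENNReal.ofReal (x ^ (p * (1 - σ) - 1)) * F x ^ p := by
        rw [← mul_assoc, hKp, setLIntegral_congr_fun measurableSet_Ioi hG]

theorem stmt0_general (p q σ : ℝ) (hp : 1 < p) (hpq : 1 / p + 1 / q = 1)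
    (h f : ℝ → ℝ) (hh : Measurable h) (hf : Measurable f)
    (hf0 : ∀ t ∈ Ioi (0 : ℝ), 0 ≤ f t) :
    (∫⁻ y in Ioi (0 : ℝ),
        ENNReal.ofReal (y ^ (p * σ - 1)) *
          (∫⁻ x in Ioi (0 : ℝ), ENNReal.ofReal (h (x * y) * f x)) ^ p)
      ≤ (∫⁻ t in Ioi (0 : ℝ), ENNReal.ofReal (h t * t ^ (σ - 1))) ^ p *
          ∫⁻ x in Ioi (0 : ℝ), ENNReal.ofReal (x ^ (p * (1 - σ) - 1) * f x ^ p) := by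
  have hpq' : p.HolderConjugate q :=
    Real.holderConjugate_iff.2 ⟨hp, by simpa only [one_div] using hpq⟩
  have hk : ∫⁻ t in Ioi 0, ENNReal.ofReal (h t * t ^ (σ - 1))
      = lmellin (fun t => ENNReal.ofReal (h t)) σ :=
    setLIntegral_congr_fun measurableSet_Ioi fun t ht => by
      rw [ENNReal.ofReal_mul' (Real.rpow_nonneg (le_of_lt ht) _), mul_comm]
  have hinner : ∀ y, ∫⁻ x in Ioi 0, ENNReal.ofReal (h (x * y) * f x)
      = ∫⁻ x in Ioi 0, ENNReal.ofReal (h (x * y)) * ENNReal.ofReal (f x) := fun y =>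
    setLIntegral_congr_fun measurableSet_Ioi fun x hx => ENNReal.ofReal_mul' (hf0 x hx)
  have hrhs : ∫⁻ x in Ioi 0, ENNReal.ofReal (x ^ (p * (1 - σ) - 1) * f x ^ p)
      = ∫⁻ x in Ioi 0, ENNReal.ofReal (x ^ (p * (1 - σ) - 1)) * ENNReal.ofReal (f x) ^ p :=
    setLIntegral_congr_fun measurableSet_Ioi fun x hx => by
      rw [ENNReal.ofReal_mul (Real.rpow_nonneg (le_of_lt hx) _),
        ENNReal.ofReal_rpow_of_nonneg (hf0 x hx) hpq'.pos.le]
  simp_rw [hinner, hk, hrhs]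
  exact lintegral_rpow_mul_lintegral_comp_mul_rpow_le hpq' σ hh.ennreal_ofReal hf.ennreal_ofReal

/-- Yang–Hilbert lemma (case `p > 1`): for nonnegative measurable `h`, `f` on `(0,∞)`
with `0 < k(σ) = ∫₀^∞ h(t) t^{σ-1} dt < ∞`, one has
`∫₀^∞ y^{pσ-1} (∫₀^∞ h(xy) f(x) dx)^p dy ≤ k(σ)^p ∫₀^∞ x^{p(1-σ)-1} f(x)^p dx`
as an inequality in `[0,∞]`. -/
theorem stmt0 (p q σ : ℝ) (hp : 1 < p) (hpq : 1 / p + 1 / q = 1)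
    (h f : ℝ → ℝ) (hh : Measurable h) (hf : Measurable f)
    (hh0 : ∀ t ∈ Ioi (0 : ℝ), 0 ≤ h t) (hf0 : ∀ t ∈ Ioi (0 : ℝ), 0 ≤ f t)
    (hk0 : 0 < ∫⁻ t in Ioi (0 : ℝ), ENNReal.ofReal (h t * t ^ (σ - 1)))
    (hk1 : (∫⁻ t in Ioi (0 : ℝ), ENNReal.ofReal (h t * t ^ (σ - 1))) < ⊤) :
    (∫⁻ y in Ioi (0 : ℝ),
        ENNReal.ofReal (y ^ (p * σ - 1)) *
          (∫⁻ x in Ioi (0 : ℝ), ENNReal.ofReal (h (x * y) * f x)) ^ p)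
      ≤ (∫⁻ t in Ioi (0 : ℝ), ENNReal.ofReal (h t * t ^ (σ - 1))) ^ p *
          ∫⁻ x in Ioi (0 : ℝ), ENNReal.ofReal (x ^ (p * (1 - σ) - 1) * f x ^ p) :=
  stmt0_general p q σ hp hpq h f hh hf hf0
end

section
/- Let p > 1 and let q satisfy 1/p + 1/q = 1, let σ ∈ ℝ, and let h be a nonnegative Lebesgue-measurable function on (0,∞) with k(σ) := ∫₀^∞ h(t) t^{σ-1} dt satisfying 0 < k(σ) < ∞. Suppose c > 0 is a constant such that for every pair of nonnegative measurable functions f, g on (0,∞) with 0 < ∫₀^∞ x^{p(1-σ)-1} f(x)^p dx < ∞ and 0 < ∫₀^∞ y^{q(1-σ)-1} g(y)^q dy < ∞ one has ∫₀^∞ ∫₀^∞ h(x·y) f(x) g(y) dx dy < c · (∫₀^∞ x^{p(1-σ)-1} f(x)^p dx)^{1/p} · (∫₀^∞ y^{q(1-σ)-1} g(y)^q dy)^{1/q}. Then c ≥ k(σ); that is, the constant k(σ) in this Hilbert-type inequality is best possible. -/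
/-!
Test the inequality against `f x = x ^ (σ - 1 + ε / p)` on `(0, 1)` and
`g y = y ^ (σ - 1 - ε / q)` on `(1, ∞)`: both weighted integrals equal `1 / ε`, so the
right-hand side is `c / ε`. Substituting `t = x y`, the left-hand side becomes
`∫_{y > 1} y ^ (-ε - 1) ∫_0^y h t * t ^ (σ - 1 + ε / p) dt dy`, which is at least
`M ^ (-ε) / ε * ∫_0^M h t * t ^ (σ - 1 + ε / p) dt` for `M ≥ 1`. On `(δ, M)` the factor
`t ^ (ε / p)` is at least `δ ^ (ε / p)`, so letting `ε → 0` bounds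
`∫_δ^M h t * t ^ (σ - 1) dt` by `c`; then let `δ → 0` and `M → ∞`.
-/

open MeasureTheory Set Filter
open scoped ENNReal

lemma setLIntegral_Ioo_zero_one_rpow_sub_one {r : ℝ} (hr : 0 < r) :
    ∫⁻ x in Ioo (0 : ℝ) 1, ENNReal.ofReal (x ^ (r - 1)) = ENNReal.ofReal (1 / r) := by
  rw [← ofReal_integral_eq_lintegral_ofReal
      ((intervalIntegrable_iff_integrableOn_Ioo_of_le zero_le_one).mp
        (intervalIntegral.intervalIntegrable_rpow' (by linarith)))
      ((ae_restrict_iff' measurableSet_Ioo).mpr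
        (ae_of_all _ fun x hx => Real.rpow_nonneg hx.1.le _)),
    ← integral_Ioc_eq_integral_Ioo, ← intervalIntegral.integral_of_le zero_le_one,
    integral_rpow (Or.inl (by linarith)), sub_add_cancel, Real.one_rpow, Real.zero_rpow hr.ne',
    sub_zero]

lemma setLIntegral_Ioi_rpow_neg_sub_one {M ε : ℝ} (hM : 0 < M) (hε : 0 < ε) :
    ∫⁻ y in Ioi M, ENNReal.ofReal (y ^ (-ε - 1)) = ENNReal.ofReal (M ^ (-ε) / ε) := by
  rw [← ofReal_integral_eq_lintegral_ofReal (integrableOn_Ioi_rpow_of_lt (by linarith) hM)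
      ((ae_restrict_iff' measurableSet_Ioi).mpr
        (ae_of_all _ fun x hx => Real.rpow_nonneg (hM.trans hx).le _)),
    integral_Ioi_rpow_of_lt (by linarith) hM, sub_add_cancel, neg_div_neg_eq]

lemma setLIntegral_Ioo_zero_one_comp_mul_right (F : ℝ → ℝ≥0∞) {y : ℝ} (hy : 0 < y) :
    ∫⁻ x in Ioo (0 : ℝ) 1, F (x * y)
      = ENNReal.ofReal y⁻¹ * ∫⁻ t in Ioo (0 : ℝ) y, F t := by
  have he := (MeasurableEquiv.mulRight₀ y hy.ne').measurableEmbedding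
  have hpre : (· * y) ⁻¹' Ioo (0 : ℝ) y = Ioo 0 1 := by
    rw [preimage_mul_const_Ioo₀ _ _ hy, zero_div, div_self hy.ne']
  calc ∫⁻ x in Ioo (0 : ℝ) 1, F (x * y)
      = ∫⁻ t, F t ∂((volume.restrict (Ioo (0 : ℝ) 1)).map (· * y)) :=
        (he.lintegral_map F).symm
    _ = ∫⁻ t, F t ∂((volume.map (· * y)).restrict (Ioo (0 : ℝ) y)) := by
        rw [← hpre]; exact congrArg (lintegral · F) (he.restrict_map _ _).symm
    _ = ENNReal.ofReal y⁻¹ * ∫⁻ t in Ioo (0 : ℝ) y, F t := by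
        rw [Real.map_volume_mul_right hy.ne', Measure.restrict_smul, lintegral_smul_measure,
          abs_of_pos (inv_pos.mpr hy), smul_eq_mul]

lemma setLIntegral_Ioi_ofReal_indicator {S : Set ℝ} (hS : MeasurableSet S) (hS0 : S ⊆ Ioi 0)
    (φ : ℝ → ℝ) :
    ∫⁻ x in Ioi 0, ENNReal.ofReal (S.indicator φ x)
      = ∫⁻ x in S, ENNReal.ofReal (φ x) := by
  simp_rw [← Function.comp_apply (f := ENNReal.ofReal),
    ← indicator_comp_of_zero (g := ENNReal.ofReal) ENNReal.ofReal_zero]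
  rw [lintegral_indicator hS, Measure.restrict_restrict hS, inter_eq_left.mpr hS0]

lemma setLIntegral_Ioi_rpow_mul_indicator_rpow {S : Set ℝ} (hS : MeasurableSet S)
    (hS0 : S ⊆ Ioi 0) {s a p : ℝ} (hp : 0 < p) :
    ∫⁻ x in Ioi 0, ENNReal.ofReal (x ^ s * S.indicator (· ^ a) x ^ p)
      = ∫⁻ x in S, ENNReal.ofReal (x ^ (s + p * a)) := by
  rw [← setLIntegral_Ioi_ofReal_indicator hS hS0]
  refine setLIntegral_congr_fun measurableSet_Ioi fun x (hx : 0 < x) => ?_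
  by_cases hxS : x ∈ S
  · rw [indicator_of_mem hxS, indicator_of_mem hxS, ← Real.rpow_mul hx.le, ← Real.rpow_add hx,
      mul_comm a]
  · rw [indicator_of_notMem hxS, indicator_of_notMem hxS, Real.zero_rpow hp.ne', mul_zero]

lemma setLIntegral_Ioi_mul_indicator_Ioo_rpow (h : ℝ → ℝ) (a : ℝ) {y : ℝ} (hy : 0 < y) :
    ∫⁻ x in Ioi 0, ENNReal.ofReal (h (x * y) * (Ioo 0 1).indicator (· ^ a) x)
      = ENNReal.ofReal (y ^ (-a - 1)) * ∫⁻ t in Ioo 0 y, ENNReal.ofReal (h t * t ^ a) := by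
  have hind : ∀ x, h (x * y) * (Ioo 0 1).indicator (· ^ a) x
      = (Ioo 0 1).indicator (fun x => h (x * y) * x ^ a) x :=
    fun x => (indicator_mul_right _ (fun x => h (x * y)) _).symm
  simp_rw [hind]
  rw [setLIntegral_Ioi_ofReal_indicator measurableSet_Ioo Ioo_subset_Ioi_self]
  have hya : 0 ≤ y ^ (-a) := Real.rpow_nonneg hy.le _
  calc ∫⁻ x in Ioo 0 1, ENNReal.ofReal (h (x * y) * x ^ a)
      = ∫⁻ x in Ioo 0 1,
          ENNReal.ofReal (h (x * y) * (x * y) ^ a) * ENNReal.ofReal (y ^ (-a)) := by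
        refine setLIntegral_congr_fun measurableSet_Ioo fun x hx => ?_
        rw [← ENNReal.ofReal_mul' hya, Real.mul_rpow hx.1.le hy.le, Real.rpow_neg hy.le,
          mul_assoc, mul_assoc, mul_inv_cancel₀ (Real.rpow_pos_of_pos hy a).ne', mul_one]
    _ = ENNReal.ofReal (y ^ (-a)) * ENNReal.ofReal y⁻¹
          * ∫⁻ t in Ioo 0 y, ENNReal.ofReal (h t * t ^ a) := by
        rw [lintegral_mul_const' _ _ ENNReal.ofReal_ne_top,
          setLIntegral_Ioo_zero_one_comp_mul_right (fun t => ENNReal.ofReal (h t * t ^ a)) hy]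
        ring
    _ = ENNReal.ofReal (y ^ (-a - 1)) * ∫⁻ t in Ioo 0 y, ENNReal.ofReal (h t * t ^ a) := by
        rw [← ENNReal.ofReal_mul hya, Real.rpow_sub hy, Real.rpow_one, div_eq_mul_inv]

lemma le_lintegral_mul_indicator_Ioo_Ioi (h : ℝ → ℝ) {a b ε M : ℝ} (hba : b - a = -ε)
    (hε : 0 < ε) (hM : 1 ≤ M) :
    ENNReal.ofReal (M ^ (-ε) / ε) * ∫⁻ t in Ioo 0 M, ENNReal.ofReal (h t * t ^ a)
      ≤ ∫⁻ y in Ioi 0, ∫⁻ x in Ioi 0, ENNReal.ofReal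
          (h (x * y) * (Ioo 0 1).indicator (· ^ a) x * (Ioi 1).indicator (· ^ b) y) := by
  set K : ℝ → ℝ≥0∞ := fun y => ∫⁻ t in Ioo 0 y, ENNReal.ofReal (h t * t ^ a)
  have hinner : ∀ y ∈ Ioi M, ENNReal.ofReal (y ^ (-ε - 1)) * K M ≤
      ∫⁻ x in Ioi 0, ENNReal.ofReal
        (h (x * y) * (Ioo 0 1).indicator (· ^ a) x * (Ioi 1).indicator (· ^ b) y) := by
    intro y (hy : M < y)
    have hy0 : 0 < y := by linarith
    have hyb : 0 ≤ y ^ b := Real.rpow_nonneg hy0.le b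
    simp_rw [indicator_of_mem (show y ∈ Ioi 1 from hM.trans_lt hy), ENNReal.ofReal_mul' hyb]
    rw [lintegral_mul_const' _ _ ENNReal.ofReal_ne_top,
      setLIntegral_Ioi_mul_indicator_Ioo_rpow h a hy0, mul_right_comm,
      ← ENNReal.ofReal_mul (Real.rpow_nonneg hy0.le _), ← Real.rpow_add hy0,
      show -a - 1 + b = -ε - 1 by linarith]
    gcongr
    exact lintegral_mono_set (Ioo_subset_Ioo_right hy.le)
  calc ENNReal.ofReal (M ^ (-ε) / ε) * K M
      = ∫⁻ y in Ioi M, ENNReal.ofReal (y ^ (-ε - 1)) * K M := by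
        rw [lintegral_mul_const _ (by fun_prop),
          setLIntegral_Ioi_rpow_neg_sub_one (by linarith) hε]
    _ ≤ _ := setLIntegral_mono' measurableSet_Ioi hinner
    _ ≤ _ := lintegral_mono_set (Ioi_subset_Ioi (by linarith))

lemma le_of_forall_pos_ofReal_mul_le {φ : ℝ → ℝ} (hφ : ContinuousAt φ 0) (hφ0 : φ 0 = 1)
    {L C : ℝ≥0∞} (hle : ∀ ε > 0, ENNReal.ofReal (φ ε) * L ≤ C) : L ≤ C := by
  have hlim : Tendsto (fun ε => ENNReal.ofReal (φ ε)) (nhdsWithin 0 (Ioi 0)) (nhds 1) := by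
    simpa [hφ0, Function.comp_def] using
      ((ENNReal.continuous_ofReal.tendsto _).comp hφ).mono_left nhdsWithin_le_nhds
  simpa using le_of_tendsto (ENNReal.Tendsto.mul_const hlim (Or.inl one_ne_zero))
    (eventually_nhdsWithin_of_forall hle)

lemma rpow_mul_setLIntegral_Ioo_le (h : ℝ → ℝ) {δ M r s : ℝ} (hδ : 0 < δ)
    (hr : 0 ≤ r) :
    ENNReal.ofReal (δ ^ r) * ∫⁻ t in Ioo δ M, ENNReal.ofReal (h t * t ^ s)
      ≤ ∫⁻ t in Ioo 0 M, ENNReal.ofReal (h t * t ^ (s + r)) := by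
  rw [← lintegral_const_mul' _ _ ENNReal.ofReal_ne_top]
  refine (setLIntegral_mono' measurableSet_Ioo fun t ht => ?_).trans
    (lintegral_mono_set (Ioo_subset_Ioo_left hδ.le))
  have ht0 : 0 < t := hδ.trans ht.1
  calc ENNReal.ofReal (δ ^ r) * ENNReal.ofReal (h t * t ^ s)
      ≤ ENNReal.ofReal (t ^ r) * ENNReal.ofReal (h t * t ^ s) := by
        gcongr
        exact ht.1.le
    _ = ENNReal.ofReal (h t * t ^ (s + r)) := by
        rw [← ENNReal.ofReal_mul (Real.rpow_nonneg ht0.le r), Real.rpow_add ht0]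
        ring_nf

lemma setLIntegral_Ioi_zero_le_of_forall_Ioo_le (F : ℝ → ℝ≥0∞) {C : ℝ≥0∞}
    (hle : ∀ δ M : ℝ, 0 < δ → 1 ≤ M → ∫⁻ t in Ioo δ M, F t ≤ C) :
    ∫⁻ t in Ioi 0, F t ≤ C := by
  have hmono : Monotone fun n : ℕ => Ioo ((n + 1 : ℝ)⁻¹) (n + 1) := fun m n hmn =>
    Ioo_subset_Ioo (inv_anti₀ (by positivity) (by gcongr)) (by gcongr)
  have hunion : ⋃ n : ℕ, Ioo ((n + 1 : ℝ)⁻¹) (n + 1) = Ioi 0 := by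
    refine Subset.antisymm (iUnion_subset fun n t ht => (inv_pos.mpr (by positivity)).trans ht.1)
      fun t (ht : 0 < t) => ?_
    obtain ⟨n, hn⟩ := exists_nat_gt (max t⁻¹ t)
    refine mem_iUnion.mpr ⟨n, ?_, by linarith [le_max_right t⁻¹ t]⟩
    exact inv_lt_of_inv_lt₀ ht (by linarith [le_max_left t⁻¹ t])
  rw [← hunion, setLIntegral_iUnion_of_directed _ hmono.directed_le]
  exact iSup_le fun n => hle _ _ (by positivity) (by linarith [n.cast_nonneg (α := ℝ)])

def IsHilbertTypeConstant (p q σ : ℝ) (h : ℝ → ℝ) (c : ℝ) : Prop :=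
  ∀ f g : ℝ → ℝ, Measurable f → Measurable g →
    (∀ x ∈ Ioi (0 : ℝ), 0 ≤ f x) → (∀ y ∈ Ioi (0 : ℝ), 0 ≤ g y) →
    0 < (∫⁻ x in Ioi (0 : ℝ), ENNReal.ofReal (x ^ (p * (1 - σ) - 1) * f x ^ p)) →
    (∫⁻ x in Ioi (0 : ℝ), ENNReal.ofReal (x ^ (p * (1 - σ) - 1) * f x ^ p)) < ⊤ →
    0 < (∫⁻ y in Ioi (0 : ℝ), ENNReal.ofReal (y ^ (q * (1 - σ) - 1) * g y ^ q)) →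
    (∫⁻ y in Ioi (0 : ℝ), ENNReal.ofReal (y ^ (q * (1 - σ) - 1) * g y ^ q)) < ⊤ →
    (∫⁻ y in Ioi (0 : ℝ), ∫⁻ x in Ioi (0 : ℝ), ENNReal.ofReal (h (x * y) * f x * g y))
      < ENNReal.ofReal c *
          (∫⁻ x in Ioi (0 : ℝ), ENNReal.ofReal (x ^ (p * (1 - σ) - 1) * f x ^ p)) ^ (1 / p) *
          (∫⁻ y in Ioi (0 : ℝ), ENNReal.ofReal (y ^ (q * (1 - σ) - 1) * g y ^ q)) ^ (1 / q)

namespace IsHilbertTypeConstant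

variable {p q σ c : ℝ} {h : ℝ → ℝ}

lemma rpow_neg_mul_setLIntegral_Ioo_le (hbd : IsHilbertTypeConstant p q σ h c) (hp : 1 < p)
    (hpq : 1 / p + 1 / q = 1) {ε M : ℝ} (hε : 0 < ε) (hM : 1 ≤ M) :
    ENNReal.ofReal (M ^ (-ε)) * ∫⁻ t in Ioo 0 M, ENNReal.ofReal (h t * t ^ (σ - 1 + ε / p))
      ≤ ENNReal.ofReal c := by
  have hp0 : 0 < p := by linarith
  have hq0 : 0 < q := one_div_pos.mp (by linarith [(div_lt_one hp0).mpr hp])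
  set f := (Ioo (0 : ℝ) 1).indicator (· ^ (σ - 1 + ε / p))
  set g := (Ioi (1 : ℝ)).indicator (· ^ (σ - 1 - ε / q))
  have hf : ∫⁻ x in Ioi 0, ENNReal.ofReal (x ^ (p * (1 - σ) - 1) * f x ^ p)
      = ENNReal.ofReal (1 / ε) := by
    rw [setLIntegral_Ioi_rpow_mul_indicator_rpow measurableSet_Ioo Ioo_subset_Ioi_self hp0,
      show p * (1 - σ) - 1 + p * (σ - 1 + ε / p) = ε - 1 by field_simp; ring,
      setLIntegral_Ioo_zero_one_rpow_sub_one hε]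
  have hg : ∫⁻ y in Ioi 0, ENNReal.ofReal (y ^ (q * (1 - σ) - 1) * g y ^ q)
      = ENNReal.ofReal (1 / ε) := by
    rw [setLIntegral_Ioi_rpow_mul_indicator_rpow measurableSet_Ioi (Ioi_subset_Ioi zero_le_one)
        hq0,
      show q * (1 - σ) - 1 + q * (σ - 1 - ε / q) = -ε - 1 by field_simp; ring,
      setLIntegral_Ioi_rpow_neg_sub_one one_pos hε, Real.one_rpow]
  have hnorm : 0 < ENNReal.ofReal (1 / ε) := ENNReal.ofReal_pos.mpr (by positivity)
  have hsum : ε / p + ε / q = ε := by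
    rw [div_eq_mul_one_div ε p, div_eq_mul_one_div ε q, ← mul_add, hpq, mul_one]
  have hJ := hbd f g ((measurable_id.pow_const _).indicator measurableSet_Ioo)
    ((measurable_id.pow_const _).indicator measurableSet_Ioi)
    (fun x _ => indicator_nonneg (fun x hx => Real.rpow_nonneg hx.1.le _) x)
    (fun y _ => indicator_nonneg (fun y (hy : 1 < y) => Real.rpow_nonneg (by linarith) _) y)
    (hf ▸ hnorm) (hf ▸ ENNReal.ofReal_lt_top) (hg ▸ hnorm) (hg ▸ ENNReal.ofReal_lt_top)
  rw [hf, hg, mul_assoc, ← ENNReal.rpow_add _ _ hnorm.ne' ENNReal.ofReal_ne_top, hpq,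
    ENNReal.rpow_one, ← ENNReal.ofReal_mul' (by positivity), mul_one_div] at hJ
  set K := ∫⁻ t in Ioo 0 M, ENNReal.ofReal (h t * t ^ (σ - 1 + ε / p))
  have hlow := (le_lintegral_mul_indicator_Ioo_Ioi h (by linarith) hε hM).trans hJ.le
  calc ENNReal.ofReal (M ^ (-ε)) * K
      = ENNReal.ofReal ε * (ENNReal.ofReal (M ^ (-ε) / ε) * K) := by
        rw [← mul_assoc, ← ENNReal.ofReal_mul hε.le, mul_div_cancel₀ _ hε.ne']
    _ ≤ ENNReal.ofReal ε * ENNReal.ofReal (c / ε) := by gcongr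
    _ = ENNReal.ofReal c := by rw [← ENNReal.ofReal_mul hε.le, mul_div_cancel₀ _ hε.ne']

lemma setLIntegral_Ioo_le (hbd : IsHilbertTypeConstant p q σ h c) (hp : 1 < p)
    (hpq : 1 / p + 1 / q = 1) {δ M : ℝ} (hδ : 0 < δ) (hM : 1 ≤ M) :
    ∫⁻ t in Ioo δ M, ENNReal.ofReal (h t * t ^ (σ - 1)) ≤ ENNReal.ofReal c := by
  have hM0 : 0 < M := by linarith
  refine le_of_forall_pos_ofReal_mul_le (φ := fun ε => M ^ (-ε) * δ ^ (ε / p))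
    (by fun_prop (disch := positivity)) (by simp) fun ε hε => ?_
  set L := ∫⁻ t in Ioo δ M, ENNReal.ofReal (h t * t ^ (σ - 1))
  calc ENNReal.ofReal (M ^ (-ε) * δ ^ (ε / p)) * L
      = ENNReal.ofReal (M ^ (-ε)) * (ENNReal.ofReal (δ ^ (ε / p)) * L) := by
        rw [ENNReal.ofReal_mul (Real.rpow_nonneg hM0.le _), mul_assoc]
    _ ≤ ENNReal.ofReal (M ^ (-ε))
          * ∫⁻ t in Ioo 0 M, ENNReal.ofReal (h t * t ^ (σ - 1 + ε / p)) := by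
        gcongr
        exact rpow_mul_setLIntegral_Ioo_le h hδ (by positivity)
    _ ≤ ENNReal.ofReal c := hbd.rpow_neg_mul_setLIntegral_Ioo_le hp hpq hε hM

end IsHilbertTypeConstant

theorem stmt4_general (p q σ : ℝ) (hp : 1 < p) (hpq : 1 / p + 1 / q = 1)
    (h : ℝ → ℝ) (c : ℝ)
    (hbd : ∀ f g : ℝ → ℝ, Measurable f → Measurable g →
      (∀ x ∈ Ioi (0 : ℝ), 0 ≤ f x) → (∀ y ∈ Ioi (0 : ℝ), 0 ≤ g y) →
      0 < (∫⁻ x in Ioi (0 : ℝ), ENNReal.ofReal (x ^ (p * (1 - σ) - 1) * f x ^ p)) →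
      (∫⁻ x in Ioi (0 : ℝ), ENNReal.ofReal (x ^ (p * (1 - σ) - 1) * f x ^ p)) < ⊤ →
      0 < (∫⁻ y in Ioi (0 : ℝ), ENNReal.ofReal (y ^ (q * (1 - σ) - 1) * g y ^ q)) →
      (∫⁻ y in Ioi (0 : ℝ), ENNReal.ofReal (y ^ (q * (1 - σ) - 1) * g y ^ q)) < ⊤ →
      (∫⁻ y in Ioi (0 : ℝ), ∫⁻ x in Ioi (0 : ℝ), ENNReal.ofReal (h (x * y) * f x * g y))
        < ENNReal.ofReal c *
            (∫⁻ x in Ioi (0 : ℝ), ENNReal.ofReal (x ^ (p * (1 - σ) - 1) * f x ^ p)) ^ (1 / p) *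
            (∫⁻ y in Ioi (0 : ℝ), ENNReal.ofReal (y ^ (q * (1 - σ) - 1) * g y ^ q)) ^ (1 / q)) :
    (∫⁻ t in Ioi (0 : ℝ), ENNReal.ofReal (h t * t ^ (σ - 1))) ≤ ENNReal.ofReal c :=
  setLIntegral_Ioi_zero_le_of_forall_Ioo_le _ fun _ _ hδ hM =>
    IsHilbertTypeConstant.setLIntegral_Ioo_le hbd hp hpq hδ hM

/-- The constant `k(σ)` in the Yang–Hilbert-type inequality is best possible: any `c > 0`
valid for all admissible `f, g` satisfies `c ≥ k(σ)`. -/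
theorem stmt4 (p q σ : ℝ) (hp : 1 < p) (hpq : 1 / p + 1 / q = 1)
    (h : ℝ → ℝ) (hh : Measurable h) (hh0 : ∀ t ∈ Ioi (0 : ℝ), 0 ≤ h t)
    (hk0 : 0 < ∫⁻ t in Ioi (0 : ℝ), ENNReal.ofReal (h t * t ^ (σ - 1)))
    (hk1 : (∫⁻ t in Ioi (0 : ℝ), ENNReal.ofReal (h t * t ^ (σ - 1))) < ⊤)
    (c : ℝ) (hc : 0 < c)
    (hbd : ∀ f g : ℝ → ℝ, Measurable f → Measurable g →
      (∀ x ∈ Ioi (0 : ℝ), 0 ≤ f x) → (∀ y ∈ Ioi (0 : ℝ), 0 ≤ g y) →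
      0 < (∫⁻ x in Ioi (0 : ℝ), ENNReal.ofReal (x ^ (p * (1 - σ) - 1) * f x ^ p)) →
      (∫⁻ x in Ioi (0 : ℝ), ENNReal.ofReal (x ^ (p * (1 - σ) - 1) * f x ^ p)) < ⊤ →
      0 < (∫⁻ y in Ioi (0 : ℝ), ENNReal.ofReal (y ^ (q * (1 - σ) - 1) * g y ^ q)) →
      (∫⁻ y in Ioi (0 : ℝ), ENNReal.ofReal (y ^ (q * (1 - σ) - 1) * g y ^ q)) < ⊤ →
      (∫⁻ y in Ioi (0 : ℝ), ∫⁻ x in Ioi (0 : ℝ), ENNReal.ofReal (h (x * y) * f x * g y))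
        < ENNReal.ofReal c *
            (∫⁻ x in Ioi (0 : ℝ), ENNReal.ofReal (x ^ (p * (1 - σ) - 1) * f x ^ p)) ^ (1 / p) *
            (∫⁻ y in Ioi (0 : ℝ), ENNReal.ofReal (y ^ (q * (1 - σ) - 1) * g y ^ q)) ^ (1 / q)) :
    (∫⁻ t in Ioi (0 : ℝ), ENNReal.ofReal (h t * t ^ (σ - 1))) ≤ ENNReal.ofReal c :=
  stmt4_general p q σ hp hpq h c hbd
end

section
/- Let p > 1 and let q satisfy 1/p + 1/q = 1, let σ ∈ ℝ, let δ ∈ {−1, 1}, and let H and f be nonnegative Lebesgue-measurable functions on ℝ such that K(σ) := ∫_{−∞}^{∞} H(t) |t|^{σ-1} dt satisfies 0 < K(σ) < ∞. Then ∫_{−∞}^{∞} |y|^{pσ−1} (∫_{−∞}^{∞} H(x^δ · y) f(x) dx)^p dy ≤ K(σ)^p · ∫_{−∞}^{∞} |x|^{p(1−δσ)−1} f(x)^p dx, as an inequality in [0,∞] (for δ = −1, x^{−1} = 1/x for x ≠ 0). -/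
open MeasureTheory Set
open scoped ENNReal

/-!
Put `k(x, y) = H(x^δ y)`. Hölder's inequality with the weight `|x|^{(1-δσ)/q}` gives
`(∫ k f dx)^p ≤ (∫ k |x|^{(1-δσ)(p-1)} f^p dx) (∫ k |x|^{δσ-1} dx)^{p/q}`, and the substitution
`t = x^δ y` (an inversion when `δ = -1`, then a dilation) evaluates the last integral as
`|y|^{-σ} K(σ)`. Multiplying by `|y|^{pσ-1}` and integrating in `y`, Tonelli's theorem leaves the
`y`-integral `∫ k |y|^{σ-1} dy = |x|^{-δσ} K(σ)`, a dilation again, so the bound collapses to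
`K(σ)^{p/q + 1} ∫ |x|^{p(1-δσ)-1} f^p dx`. This is a weighted Schur test.
-/

section Schur

variable {X Y : Type*} [MeasurableSpace X] [MeasurableSpace Y] {μ : Measure X} {ν : Measure Y}
  {p q : ℝ}

theorem lintegral_mul_rpow_le_of_weight (hpq : p.HolderConjugate q) {k f a : X → ℝ≥0∞}
    (hk : AEMeasurable k μ) (hf : AEMeasurable f μ) (ha : AEMeasurable a μ)
    (ha0 : ∀ᵐ x ∂μ, a x ≠ 0) (haT : ∀ᵐ x ∂μ, a x ≠ ∞) :
    (∫⁻ x, k x * f x ∂μ) ^ p ≤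
      (∫⁻ x, k x * a x ^ (-q) ∂μ) ^ (p / q) * ∫⁻ x, k x * (a x ^ p * f x ^ p) ∂μ := by
  have hp := hpq.pos
  have hq := hpq.symm.pos
  have root_pow : ∀ {r : ℝ}, 0 < r → ∀ z : ℝ≥0∞, (z ^ (1 / r)) ^ r = z := fun hr z => by
    rw [← ENNReal.rpow_mul, one_div_mul_cancel hr.ne', ENNReal.rpow_one]
  set F : X → ℝ≥0∞ := fun x => (k x * (a x ^ p * f x ^ p)) ^ (1 / p)
  set G : X → ℝ≥0∞ := fun x => (k x * a x ^ (-q)) ^ (1 / q)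
  have hfactor : ∀ᵐ x ∂μ, k x * f x = (F * G) x := by
    filter_upwards [ha0, haT] with x hx0 hxT
    simp only [F, G, Pi.mul_apply]
    rw [ENNReal.mul_rpow_of_nonneg _ _ (by positivity),
      ENNReal.mul_rpow_of_nonneg _ _ (by positivity),
      ENNReal.mul_rpow_of_nonneg _ _ (by positivity), ← ENNReal.rpow_mul, ← ENNReal.rpow_mul,
      ← ENNReal.rpow_mul, mul_one_div_cancel hp.ne', neg_mul, mul_one_div_cancel hq.ne',
      ENNReal.rpow_one, ENNReal.rpow_one, ENNReal.rpow_neg_one]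
    calc k x * f x = (k x ^ (1 / p) * k x ^ (1 / q)) * (a x * (a x)⁻¹) * f x := by
          rw [← ENNReal.rpow_add_of_nonneg _ _ (by positivity) (by positivity),
            hpq.one_div_add_one_div, div_one, ENNReal.rpow_one, ENNReal.mul_inv_cancel hx0 hxT,
            mul_one]
      _ = _ := by ring
  have hF : AEMeasurable F μ := (hk.mul ((ha.pow_const p).mul (hf.pow_const p))).pow_const _
  have hG : AEMeasurable G μ := (hk.mul (ha.pow_const _)).pow_const _
  calc (∫⁻ x, k x * f x ∂μ) ^ p = (∫⁻ x, (F * G) x ∂μ) ^ p := by rw [lintegral_congr_ae hfactor]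
    _ ≤ ((∫⁻ x, F x ^ p ∂μ) ^ (1 / p) * (∫⁻ x, G x ^ q ∂μ) ^ (1 / q)) ^ p :=
        ENNReal.rpow_le_rpow (ENNReal.lintegral_mul_le_Lp_mul_Lq μ hpq hF hG) hp.le
    _ = _ := by
        simp only [F, G, root_pow hp, root_pow hq]
        rw [ENNReal.mul_rpow_of_nonneg _ _ hp.le, root_pow hp, ← ENNReal.rpow_mul,
          one_div_mul_eq_div, mul_comm]

theorem lintegral_rpow_lintegral_le_of_schur [SFinite μ] [SFinite ν] (hpq : p.HolderConjugate q)
    {k : X → Y → ℝ≥0∞} (hk : Measurable (Function.uncurry k)) {f a d : X → ℝ≥0∞}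
    {w : Y → ℝ≥0∞} (hf : Measurable f) (ha : Measurable a) (hd : Measurable d)
    (hw : Measurable w) (ha0 : ∀ᵐ x ∂μ, a x ≠ 0) (haT : ∀ᵐ x ∂μ, a x ≠ ∞) {A B : ℝ≥0∞}
    (hA : ∀ᵐ y ∂ν, ∫⁻ x, k x y * a x ^ (-q) ∂μ ≤ A * w y)
    (hB : ∀ᵐ x ∂μ, ∫⁻ y, w y ^ (p / q) * k x y ∂ν ≤ B * d x) :
    ∫⁻ y, (∫⁻ x, k x y * f x ∂μ) ^ p ∂ν ≤
      A ^ (p / q) * B * ∫⁻ x, d x * a x ^ p * f x ^ p ∂μ := by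
  have hpq_nonneg : 0 ≤ p / q := div_nonneg hpq.nonneg hpq.symm.nonneg
  set g : X → ℝ≥0∞ := fun x => a x ^ p * f x ^ p
  have hg : Measurable g := (ha.pow_const p).mul (hf.pow_const p)
  have hky : ∀ y, Measurable (k · y) := fun y => hk.comp (measurable_id.prodMk measurable_const)
  have hkx : ∀ x, Measurable (k x) := fun x => hk.comp (measurable_const.prodMk measurable_id)
  have hkwg : Measurable (Function.uncurry fun y x => w y ^ (p / q) * k x y * g x) :=
    ((hw.pow_const _).comp measurable_fst |>.mul (hk.comp measurable_swap)).mul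
      (hg.comp measurable_snd)
  have hJ : Measurable fun y => ∫⁻ x, w y ^ (p / q) * k x y * g x ∂μ :=
    hkwg.lintegral_prod_right'
  have hpointwise : ∀ᵐ y ∂ν,
      (∫⁻ x, k x y * f x ∂μ) ^ p ≤ A ^ (p / q) * ∫⁻ x, w y ^ (p / q) * k x y * g x ∂μ := by
    filter_upwards [hA] with y hy
    calc (∫⁻ x, k x y * f x ∂μ) ^ p ≤ (A * w y) ^ (p / q) * ∫⁻ x, k x y * g x ∂μ :=
          (lintegral_mul_rpow_le_of_weight hpq (hky y).aemeasurable hf.aemeasurable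
            ha.aemeasurable ha0 haT).trans (by gcongr)
      _ = _ := by
          rw [ENNReal.mul_rpow_of_nonneg _ _ hpq_nonneg, mul_assoc,
            ← lintegral_const_mul _ ((hky y).fun_mul hg)]
          simp only [mul_assoc]
  have htonelli : ∫⁻ y, ∫⁻ x, w y ^ (p / q) * k x y * g x ∂μ ∂ν =
      ∫⁻ x, (∫⁻ y, w y ^ (p / q) * k x y ∂ν) * g x ∂μ := by
    rw [lintegral_lintegral_swap hkwg.aemeasurable]
    exact lintegral_congr fun x => lintegral_mul_const _ ((hw.pow_const _).fun_mul (hkx x))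
  calc ∫⁻ y, (∫⁻ x, k x y * f x ∂μ) ^ p ∂ν
      ≤ ∫⁻ y, A ^ (p / q) * ∫⁻ x, w y ^ (p / q) * k x y * g x ∂μ ∂ν :=
        lintegral_mono_ae hpointwise
    _ = A ^ (p / q) * ∫⁻ x, (∫⁻ y, w y ^ (p / q) * k x y ∂ν) * g x ∂μ := by
        rw [lintegral_const_mul _ hJ, htonelli]
    _ ≤ A ^ (p / q) * ∫⁻ x, B * (d x * g x) ∂μ := by
        gcongr A ^ (p / q) * ?_
        refine lintegral_mono_ae ?_
        filter_upwards [hB] with x hx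
        exact (mul_le_mul_left hx _).trans_eq (mul_assoc _ _ _)
    _ = A ^ (p / q) * B * ∫⁻ x, d x * a x ^ p * f x ^ p ∂μ := by
        rw [lintegral_const_mul _ (hd.fun_mul hg), mul_assoc]
        simp only [g, mul_assoc]

theorem rpow_div_conj_mul_self (hpq : p.HolderConjugate q) (x : ℝ≥0∞) :
    x ^ (p / q) * x = x ^ p := by
  rw [hpq.div_conj_eq_sub_one]
  nth_rewrite 2 [← ENNReal.rpow_one x]
  rw [← ENNReal.rpow_add_of_nonneg _ _ hpq.sub_one_pos.le zero_le_one, sub_add_cancel]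

end Schur

section PowerWeights

theorem ofReal_abs_rpow_mul {x : ℝ} (hx : x ≠ 0) (a b : ℝ) :
    ENNReal.ofReal (|x| ^ a) * ENNReal.ofReal (|x| ^ b) = ENNReal.ofReal (|x| ^ (a + b)) := by
  rw [← ENNReal.ofReal_mul (by positivity), Real.rpow_add (abs_pos.2 hx)]

theorem ofReal_abs_rpow_rpow {x : ℝ} (hx : x ≠ 0) (a r : ℝ) :
    ENNReal.ofReal (|x| ^ a) ^ r = ENNReal.ofReal (|x| ^ (a * r)) := by
  rw [ENNReal.ofReal_rpow_of_pos (by positivity), Real.rpow_mul (abs_nonneg x)]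

theorem lintegral_comp_mul_left_mul_abs_rpow {G : ℝ → ℝ≥0∞} (hG : Measurable G) {c : ℝ}
    (hc : c ≠ 0) (β : ℝ) :
    ∫⁻ x, G (c * x) * ENNReal.ofReal (|x| ^ β) =
      ENNReal.ofReal (|c| ^ (-(β + 1))) * ∫⁻ t, G t * ENNReal.ofReal (|t| ^ β) := by
  have hweight : ∀ᵐ x : ℝ, G (c * x) * ENNReal.ofReal (|x| ^ β) =
      ENNReal.ofReal (|c| ^ (-β)) * (G (c * x) * ENNReal.ofReal (|c * x| ^ β)) := by
    filter_upwards [Measure.ae_ne volume 0] with x hx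
    rw [mul_left_comm, ← ENNReal.ofReal_mul (by positivity), abs_mul,
      Real.mul_rpow (abs_nonneg c) (abs_nonneg x), ← mul_assoc,
      ← Real.rpow_add (abs_pos.2 hc), neg_add_cancel, Real.rpow_zero, one_mul]
  have hGw : Measurable fun t => G t * ENNReal.ofReal (|t| ^ β) := by fun_prop
  rw [lintegral_congr_ae hweight, lintegral_const_mul' _ _ ENNReal.ofReal_ne_top,
    ← lintegral_map hGw (measurable_const_mul c), Real.map_volume_mul_left hc,
    lintegral_smul_measure, smul_eq_mul, ← mul_assoc, abs_inv, ← Real.rpow_neg_one,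
    ofReal_abs_rpow_mul hc]
  ring_nf

theorem lintegral_comp_inv_mul_abs_rpow (G : ℝ → ℝ≥0∞) (β : ℝ) :
    ∫⁻ x, G x⁻¹ * ENNReal.ofReal (|x| ^ β) = ∫⁻ t, G t * ENNReal.ofReal (|t| ^ (-β - 2)) := by
  have hs : MeasurableSet ({0}ᶜ : Set ℝ) := (measurableSet_singleton 0).compl
  have hfull : ({0}ᶜ : Set ℝ) =ᵐ[volume] univ := by simp [ae_eq_univ]
  have himage : Inv.inv '' ({0}ᶜ : Set ℝ) = {0}ᶜ := by simp
  have hchange := lintegral_image_eq_lintegral_abs_deriv_mul hs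
    (fun x hx => (hasDerivAt_inv hx).hasDerivWithinAt) inv_injective.injOn
    (fun t => G t * ENNReal.ofReal (|t| ^ (-β - 2)))
  rw [himage, setLIntegral_congr hfull, setLIntegral_univ, setLIntegral_congr hfull,
    setLIntegral_univ] at hchange
  rw [hchange]
  refine lintegral_congr_ae ?_
  filter_upwards [Measure.ae_ne volume 0] with x hx
  have hx' : 0 < |x| := abs_pos.2 hx
  rw [mul_left_comm, ← ENNReal.ofReal_mul (abs_nonneg _), abs_neg, abs_inv, abs_inv, abs_pow,
    Real.inv_rpow hx'.le, ← Real.rpow_neg hx'.le, ← Real.rpow_natCast, ← Real.rpow_neg hx'.le,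
    ← Real.rpow_add hx']
  ring_nf

theorem lintegral_withDensity_ofReal_abs_rpow (r : ℝ) (F : ℝ → ℝ≥0∞) :
    ∫⁻ y, F y ∂volume.withDensity (fun y => ENNReal.ofReal (|y| ^ r)) =
      ∫⁻ y, ENNReal.ofReal (|y| ^ r) * F y :=
  lintegral_withDensity_eq_lintegral_mul_non_measurable volume (by fun_prop)
    (ae_of_all _ fun _ => ENNReal.ofReal_lt_top) F

end PowerWeights

section Kernel

/-- The paper's `K(σ)`. -/
noncomputable def absMellin (h : ℝ → ℝ≥0∞) (σ : ℝ) : ℝ≥0∞ :=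
  ∫⁻ t, h t * ENNReal.ofReal (|t| ^ (σ - 1))

variable {h : ℝ → ℝ≥0∞} (σ : ℝ)

theorem lintegral_comp_mul_left_mul_abs_rpow_sub_one (hh : Measurable h) {c : ℝ} (hc : c ≠ 0) :
    ∫⁻ y, h (c * y) * ENNReal.ofReal (|y| ^ (σ - 1)) =
      ENNReal.ofReal (|c| ^ (-σ)) * absMellin h σ := by
  rw [lintegral_comp_mul_left_mul_abs_rpow hh hc, sub_add_cancel, absMellin]

theorem lintegral_comp_zpow_mul_mul_abs_rpow (hh : Measurable h) (δ : ℤ) {x : ℝ} (hx : x ≠ 0) :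
    ∫⁻ y, h (x ^ δ * y) * ENNReal.ofReal (|y| ^ (σ - 1)) =
      ENNReal.ofReal (|x| ^ (-(δ * σ))) * absMellin h σ := by
  rw [lintegral_comp_mul_left_mul_abs_rpow_sub_one σ hh (zpow_ne_zero δ hx), abs_zpow,
    ← Real.rpow_intCast, ← Real.rpow_mul (abs_nonneg x), mul_neg]

theorem lintegral_comp_zpow_mul_const_mul_abs_rpow (hh : Measurable h) {δ : ℤ}
    (hδ : δ = -1 ∨ δ = 1) {y : ℝ} (hy : y ≠ 0) :
    ∫⁻ x, h (x ^ δ * y) * ENNReal.ofReal (|x| ^ (δ * σ - 1)) =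
      ENNReal.ofReal (|y| ^ (-σ)) * absMellin h σ := by
  rw [← lintegral_comp_mul_left_mul_abs_rpow_sub_one σ hh hy]
  rcases hδ with rfl | rfl
  · simp only [zpow_neg_one, Int.cast_neg, Int.cast_one, neg_one_mul]
    rw [lintegral_comp_inv_mul_abs_rpow (fun t => h (t * y)), show -(-σ - 1) - 2 = σ - 1 by ring]
    simp only [mul_comm _ y]
  · simp only [zpow_one, Int.cast_one, one_mul, mul_comm _ y]

theorem lintegral_abs_rpow_mul_lintegral_comp_zpow_mul_rpow_le {p q : ℝ}
    (hpq : p.HolderConjugate q) (hh : Measurable h) {g : ℝ → ℝ≥0∞} (hg : Measurable g) {δ : ℤ}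
    (hδ : δ = -1 ∨ δ = 1) :
    ∫⁻ y, ENNReal.ofReal (|y| ^ (p * σ - 1)) * (∫⁻ x, h (x ^ δ * y) * g x) ^ p ≤
      absMellin h σ ^ p * ∫⁻ x, ENNReal.ofReal (|x| ^ (p * (1 - δ * σ) - 1)) * g x ^ p := by
  have hq : q ≠ 0 := hpq.symm.ne_zero
  have hpq_sub : p / q = p - 1 := hpq.div_conj_eq_sub_one
  set ν := volume.withDensity fun y : ℝ => ENNReal.ofReal (|y| ^ (p * σ - 1))
  have hν_ne : ∀ᵐ y ∂ν, y ≠ 0 :=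
    (withDensity_absolutelyContinuous _ _).ae_le (Measure.ae_ne volume 0)
  have hk : Measurable (Function.uncurry fun x y : ℝ => h (x ^ δ * y)) :=
    hh.comp (by fun_prop)
  have hA : ∀ᵐ y ∂ν, ∫⁻ x, h (x ^ δ * y) * ENNReal.ofReal (|x| ^ ((1 - δ * σ) / q)) ^ (-q) ≤
      absMellin h σ * ENNReal.ofReal (|y| ^ (-σ)) := by
    filter_upwards [hν_ne] with y hy
    rw [mul_comm (absMellin h σ), ← lintegral_comp_zpow_mul_const_mul_abs_rpow σ hh hδ hy]
    refine (lintegral_congr_ae ?_).le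
    filter_upwards [Measure.ae_ne volume 0] with x hx
    rw [ofReal_abs_rpow_rpow hx]
    congr 3
    field_simp
    ring
  have hB : ∀ᵐ x, ∫⁻ y, ENNReal.ofReal (|y| ^ (-σ)) ^ (p / q) * h (x ^ δ * y) ∂ν ≤
      absMellin h σ * ENNReal.ofReal (|x| ^ (-(δ * σ))) := by
    filter_upwards [Measure.ae_ne volume 0] with x hx
    rw [lintegral_withDensity_ofReal_abs_rpow, mul_comm (absMellin h σ),
      ← lintegral_comp_zpow_mul_mul_abs_rpow σ hh δ hx]
    refine (lintegral_congr_ae ?_).le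
    filter_upwards [Measure.ae_ne volume 0] with y hy
    rw [← mul_assoc, ofReal_abs_rpow_rpow hy, ofReal_abs_rpow_mul hy, hpq_sub, mul_comm]
    ring_nf
  have hRHS : ∫⁻ x, ENNReal.ofReal (|x| ^ (-(δ * σ))) *
        ENNReal.ofReal (|x| ^ ((1 - δ * σ) / q)) ^ p * g x ^ p =
      ∫⁻ x, ENNReal.ofReal (|x| ^ (p * (1 - δ * σ) - 1)) * g x ^ p := by
    refine lintegral_congr_ae ?_
    filter_upwards [Measure.ae_ne volume 0] with x hx
    rw [ofReal_abs_rpow_rpow hx, ofReal_abs_rpow_mul hx, div_mul_eq_mul_div, mul_div_assoc,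
      hpq_sub]
    ring_nf
  rw [← rpow_div_conj_mul_self hpq, ← hRHS, ← lintegral_withDensity_ofReal_abs_rpow]
  refine lintegral_rpow_lintegral_le_of_schur hpq hk hg (by fun_prop) (by fun_prop) (by fun_prop)
    ?_ (ae_of_all _ fun _ => ENNReal.ofReal_ne_top) hA hB
  filter_upwards [Measure.ae_ne volume 0] with x hx
  exact (ENNReal.ofReal_pos.2 (by positivity)).ne'

end Kernel

theorem stmt15_general (p q σ : ℝ) (hp : 1 < p) (hpq : 1 / p + 1 / q = 1)
    (δ : ℤ) (hδ : δ = -1 ∨ δ = 1)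
    (H f : ℝ → ℝ) (hH : Measurable H) (hf : Measurable f)
    (hH0 : ∀ t : ℝ, 0 ≤ H t) (hf0 : ∀ x : ℝ, 0 ≤ f x) :
    (∫⁻ y : ℝ,
        ENNReal.ofReal (|y| ^ (p * σ - 1)) *
          (∫⁻ x : ℝ, ENNReal.ofReal (H (x ^ δ * y) * f x)) ^ p)
      ≤ (∫⁻ t : ℝ, ENNReal.ofReal (H t * |t| ^ (σ - 1))) ^ p *
          ∫⁻ x : ℝ, ENNReal.ofReal (|x| ^ (p * (1 - (δ : ℝ) * σ) - 1) * f x ^ p) := by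
  have hpq' : p.HolderConjugate q :=
    Real.holderConjugate_iff.2 ⟨hp, by simpa only [one_div] using hpq⟩
  simp only [ENNReal.ofReal_mul, hH0, abs_nonneg, Real.rpow_nonneg,
    ← ENNReal.ofReal_rpow_of_nonneg, hf0, hpq'.nonneg]
  exact lintegral_abs_rpow_mul_lintegral_comp_zpow_mul_rpow_le σ hpq' hH.ennreal_ofReal
    hf.ennreal_ofReal hδ

/-- Whole-plane Yang–Hilbert lemma (`p > 1`, `δ ∈ {-1,1}`): for nonnegative measurable
`H`, `f` on `ℝ` with `0 < K(σ) = ∫_ℝ H(t) |t|^{σ-1} dt < ∞`,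
`∫_ℝ |y|^{pσ-1} (∫_ℝ H(x^δ y) f(x) dx)^p dy ≤ K(σ)^p ∫_ℝ |x|^{p(1-δσ)-1} f(x)^p dx`
as an inequality in `[0,∞]` (here `x^δ` is the integer power, so `x^{-1} = 1/x`). -/
theorem stmt15 (p q σ : ℝ) (hp : 1 < p) (hpq : 1 / p + 1 / q = 1)
    (δ : ℤ) (hδ : δ = -1 ∨ δ = 1)
    (H f : ℝ → ℝ) (hH : Measurable H) (hf : Measurable f)
    (hH0 : ∀ t : ℝ, 0 ≤ H t) (hf0 : ∀ x : ℝ, 0 ≤ f x)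
    (hK0 : 0 < ∫⁻ t : ℝ, ENNReal.ofReal (H t * |t| ^ (σ - 1)))
    (hK1 : (∫⁻ t : ℝ, ENNReal.ofReal (H t * |t| ^ (σ - 1))) < ⊤) :
    (∫⁻ y : ℝ,
        ENNReal.ofReal (|y| ^ (p * σ - 1)) *
          (∫⁻ x : ℝ, ENNReal.ofReal (H (x ^ δ * y) * f x)) ^ p)
      ≤ (∫⁻ t : ℝ, ENNReal.ofReal (H t * |t| ^ (σ - 1))) ^ p *
          ∫⁻ x : ℝ, ENNReal.ofReal (|x| ^ (p * (1 - (δ : ℝ) * σ) - 1) * f x ^ p) :=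
  stmt15_general p q σ hp hpq δ hδ H f hH hf hH0 hf0
end

section
/- Let p > 1 and let q satisfy 1/p + 1/q = 1, let σ ∈ ℝ, let δ ∈ {−1, 1}, and let H be a nonnegative Lebesgue-measurable function on ℝ with K(σ) := ∫_{−∞}^{∞} H(t) |t|^{σ-1} dt satisfying 0 < K(σ) < ∞. Suppose c > 0 is a constant such that for every pair of nonnegative measurable functions f, g on ℝ with 0 < ∫_{−∞}^{∞} |x|^{p(1−δσ)−1} f(x)^p dx < ∞ and 0 < ∫_{−∞}^{∞} |y|^{q(1−σ)−1} g(y)^q dy < ∞ one has ∫_{−∞}^{∞} ∫_{−∞}^{∞} H(x^δ · y) f(x) g(y) dx dy < c · (∫_{−∞}^{∞} |x|^{p(1−δσ)−1} f(x)^p dx)^{1/p} · (∫_{−∞}^{∞} |y|^{q(1−σ)−1} g(y)^q dy)^{1/q}. Then c ≥ K(σ); that is, the constant K(σ) in this whole-plane Hilbert-type inequality is best possible. -/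
/-!
Test the inequality with `f(x) = |x|^(δσ - 1 - δε/p)` on `{|x|^δ ≥ 1}` and
`g(y) = |y|^(σ - 1 + ε/q)` on `{|y| ≤ 1}`: both weighted norms equal `2/ε`. Substituting
`t = x^δ y` in the inner integral and exchanging the order of integration, the double integral
becomes `(2/ε) ∫ H(t) |t|^(σ-1) k_ε(t) dt` with `k_ε(t) = |t|^(ε/q) max(1, |t|)^(-ε)`, because
`∫_{|x|^δ ≥ r} |x|^(-1-δε) dx = 2 r^(-ε) / ε`. Hence `∫ H(t) |t|^(σ-1) k_ε(t) dt ≤ c` for every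
`ε > 0`, and `k_ε → 1` as `ε → 0⁺`, so Fatou's lemma gives `K(σ) ≤ c`.
-/

open MeasureTheory Set Filter Topology ENNReal

theorem lintegral_comp_abs (F : ℝ → ℝ≥0∞) :
    ∫⁻ x, F |x| = 2 * ∫⁻ x in Ioi 0, F x := by
  have hpos : ∫⁻ x in Ioi 0, F |x| = ∫⁻ x in Ioi 0, F x :=
    setLIntegral_congr_fun measurableSet_Ioi fun x hx => by rw [abs_of_pos hx]
  have hneg : ∫⁻ x in Iic 0, F |x| = ∫⁻ x in Ioi 0, F x := by
    rw [← hpos, ← (Measure.measurePreserving_neg volume).setLIntegral_comp_preimage_emb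
      (Homeomorph.neg ℝ).measurableEmbedding, neg_preimage, neg_Iic, neg_zero,
      Measure.restrict_congr_set Ioi_ae_eq_Ici.symm]
    simp only [abs_neg]
  rw [← lintegral_add_compl _ measurableSet_Ioi, compl_Ioi, hpos, hneg, two_mul]

theorem setLIntegral_comp_abs {s : Set ℝ} (hs : MeasurableSet s) (F : ℝ → ℝ≥0∞) :
    ∫⁻ x in abs ⁻¹' s, F |x| = 2 * ∫⁻ x in s ∩ Ioi 0, F x := by
  rw [← lintegral_indicator (measurable_abs hs), ← Measure.restrict_restrict hs,
    ← lintegral_indicator hs, ← lintegral_comp_abs]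
  rfl

theorem lintegral_Ioi_rpow {η R : ℝ} (hη : 0 < η) (hR : 0 < R) :
    ∫⁻ x in Ioi R, ENNReal.ofReal (x ^ (-1 - η)) = ENNReal.ofReal (R ^ (-η) / η) := by
  have ha : -1 - η < -1 := by linarith
  rw [← ofReal_integral_eq_lintegral_ofReal (integrableOn_Ioi_rpow_of_lt ha hR)
      ((ae_restrict_iff' measurableSet_Ioi).2 (ae_of_all _ fun x hx =>
        Real.rpow_nonneg (hR.trans hx).le _)),
    integral_Ioi_rpow_of_lt ha hR, show -1 - η + 1 = -η by ring]
  congr 1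
  field_simp

theorem lintegral_Ioc_rpow {η R : ℝ} (hη : 0 < η) (hR : 0 < R) :
    ∫⁻ x in Ioc 0 R, ENNReal.ofReal (x ^ (-1 + η)) = ENNReal.ofReal (R ^ η / η) := by
  have ha : (-1 : ℝ) < -1 + η := by linarith
  rw [← ofReal_integral_eq_lintegral_ofReal
      ((intervalIntegrable_iff_integrableOn_Ioc_of_le hR.le).1
        (intervalIntegral.intervalIntegrable_rpow' ha))
      ((ae_restrict_iff' measurableSet_Ioc).2 (ae_of_all _ fun x hx =>
        Real.rpow_nonneg hx.1.le _)),
    ← intervalIntegral.integral_of_le hR.le, integral_rpow (.inl ha),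
    show -1 + η + 1 = η by ring, Real.zero_rpow hη.ne']
  simp

theorem setLIntegral_abs_rpow_le_abs_zpow {δ : ℤ} (hδ : δ = -1 ∨ δ = 1) {ε r : ℝ}
    (hε : 0 < ε) (hr : 0 < r) :
    ∫⁻ x in {x : ℝ | r ≤ |x ^ δ|}, ENNReal.ofReal (|x| ^ (-1 - δ * ε)) =
      ENNReal.ofReal (2 / ε * r ^ (-ε)) := by
  rcases hδ with rfl | rfl
  · have hs : {x : ℝ | r ≤ |x ^ (-1 : ℤ)|} = abs ⁻¹' {u | r ≤ u⁻¹} := by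
      ext x; simp [abs_inv]
    have hs' : {u : ℝ | r ≤ u⁻¹} ∩ Ioi 0 = Ioc 0 r⁻¹ := by
      ext u
      simp only [mem_inter_iff, mem_ofPred_eq, mem_Ioi, mem_Ioc]
      exact ⟨fun ⟨h, hu⟩ => ⟨hu, (le_inv_comm₀ hr hu).1 h⟩,
        fun ⟨hu, h⟩ => ⟨(le_inv_comm₀ hr hu).2 h, hu⟩⟩
    rw [hs, setLIntegral_comp_abs (measurableSet_le measurable_const measurable_inv)
      (fun u => ENNReal.ofReal (u ^ (-1 - (-1 : ℤ) * ε))), hs']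
    push_cast
    rw [show -1 - -1 * ε = -1 + ε by ring, lintegral_Ioc_rpow hε (inv_pos.2 hr),
      ← ENNReal.ofReal_ofNat 2, ← ENNReal.ofReal_mul zero_le_two, Real.inv_rpow hr.le,
      ← Real.rpow_neg hr.le]
    ring_nf
  · have hs : {x : ℝ | r ≤ |x ^ (1 : ℤ)|} = abs ⁻¹' Ici r := by
      ext x; simp
    rw [hs, setLIntegral_comp_abs measurableSet_Ici
      (fun u => ENNReal.ofReal (u ^ (-1 - (1 : ℤ) * ε))),
      inter_eq_left.2 (Ici_subset_Ioi.2 hr), Measure.restrict_congr_set Ioi_ae_eq_Ici.symm]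
    push_cast
    rw [one_mul, lintegral_Ioi_rpow hε hr, ← ENNReal.ofReal_ofNat 2,
      ← ENNReal.ofReal_mul zero_le_two]
    ring_nf

theorem lintegral_comp_mul_left {a : ℝ} (ha : a ≠ 0) {Φ : ℝ → ℝ≥0∞} (hΦ : Measurable Φ) :
    ∫⁻ y, Φ (a * y) = ENNReal.ofReal |a|⁻¹ * ∫⁻ t, Φ t := by
  rw [← lintegral_map hΦ (measurable_const_mul a), Real.map_volume_mul_left ha,
    lintegral_smul_measure, abs_inv, smul_eq_mul]

theorem lintegral_lintegral_mul_comp {φ : ℝ → ℝ} (hφ : Measurable φ) (hφ0 : ∀ᵐ x, φ x ≠ 0)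
    {H F G : ℝ → ℝ≥0∞} (hH : Measurable H) (hF : Measurable F) (hG : Measurable G) :
    ∫⁻ y, ∫⁻ x, H (φ x * y) * F x * G y =
      ∫⁻ t, H t * ∫⁻ x, F x * ENNReal.ofReal |φ x|⁻¹ * G (t / φ x) := by
  have hsubst : ∀ x, φ x ≠ 0 → ∫⁻ y, H (φ x * y) * F x * G y =
      ∫⁻ t, ENNReal.ofReal |φ x|⁻¹ * (F x * (H t * G (t / φ x))) := fun x hx => by
    rw [lintegral_const_mul _ (by fun_prop), ← lintegral_comp_mul_left hx (by fun_prop)]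
    simp only [mul_div_cancel_left₀ _ hx]
    exact lintegral_congr fun y => by ring
  calc ∫⁻ y, ∫⁻ x, H (φ x * y) * F x * G y
      = ∫⁻ x, ∫⁻ y, H (φ x * y) * F x * G y :=
        lintegral_lintegral_swap (by fun_prop)
    _ = ∫⁻ x, ∫⁻ t, ENNReal.ofReal |φ x|⁻¹ * (F x * (H t * G (t / φ x))) :=
        lintegral_congr_ae (hφ0.mono hsubst)
    _ = ∫⁻ t, ∫⁻ x, H t * (F x * ENNReal.ofReal |φ x|⁻¹ * G (t / φ x)) := by
        rw [lintegral_lintegral_swap (by fun_prop)]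
        exact lintegral_congr fun t => lintegral_congr fun x => by ring
    _ = ∫⁻ t, H t * ∫⁻ x, F x * ENNReal.ofReal |φ x|⁻¹ * G (t / φ x) :=
        lintegral_congr fun t => lintegral_const_mul _ (by fun_prop)

theorem lintegral_le_of_tendsto {α ι : Type*} [MeasurableSpace α] {μ : Measure α}
    {l : Filter ι} [l.NeBot] [l.IsCountablyGenerated] {F : ι → α → ℝ≥0∞} {f : α → ℝ≥0∞}
    {C : ℝ≥0∞} (hF : ∀ i, AEMeasurable (F i) μ)
    (hlim : ∀ᵐ a ∂μ, Tendsto (fun i => F i a) l (𝓝 (f a)))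
    (hC : ∃ᶠ i in l, ∫⁻ a, F i a ∂μ ≤ C) :
    ∫⁻ a, f a ∂μ ≤ C :=
  calc ∫⁻ a, f a ∂μ = ∫⁻ a, liminf (fun i => F i a) l ∂μ :=
        lintegral_congr_ae (hlim.mono fun _ h => h.liminf_eq.symm)
    _ ≤ liminf (fun i => ∫⁻ a, F i a ∂μ) l := lintegral_liminf_le' hF
    _ ≤ C := liminf_le_of_frequently_le' hC

theorem tendsto_abs_rpow_add_div_mul_max_rpow_neg {t : ℝ} (ht : t ≠ 0) (b q : ℝ) :
    Tendsto (fun ε : ℝ => |t| ^ (b + ε / q) * max 1 |t| ^ (-ε)) (𝓝 0) (𝓝 (|t| ^ b)) := by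
  have hcont : Continuous fun ε : ℝ => |t| ^ (b + ε / q) * max 1 |t| ^ (-ε) :=
    (continuous_const.rpow (by fun_prop) fun _ => .inl (abs_ne_zero.2 ht)).mul
      (continuous_const.rpow continuous_neg fun _ => .inl (by positivity))
  simpa using hcont.tendsto 0

/-- For `δ = 1` this is `|x|^a` on `|x| ≥ 1`, for `δ = -1` it is `|x|^a` on `0 < |x| ≤ 1`
(as `0⁻¹ = 0`).
The test functions are `f = truncPow δ (δσ - 1 - δε/p)` and `g = truncPow (-1) (σ - 1 + ε/q)`. -/
noncomputable def truncPow (δ : ℤ) (a x : ℝ) : ℝ := if 1 ≤ |x ^ δ| then |x| ^ a else 0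

theorem truncPow_nonneg (δ : ℤ) (a x : ℝ) : 0 ≤ truncPow δ a x := by
  unfold truncPow; split_ifs <;> positivity

theorem measurable_truncPow (δ : ℤ) (a : ℝ) : Measurable (truncPow δ a) :=
  Measurable.ite (measurableSet_le measurable_const (by fun_prop)) (by fun_prop) measurable_const

theorem ofReal_rpow_mul_truncPow_rpow {δ : ℤ} {u a p x : ℝ} (hp : p ≠ 0) (hx : x ≠ 0) :
    ENNReal.ofReal (|x| ^ u * truncPow δ a x ^ p) =
      {x | 1 ≤ |x ^ δ|}.indicator (fun x => ENNReal.ofReal (|x| ^ (u + p * a))) x := by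
  unfold truncPow
  by_cases hx1 : 1 ≤ |x ^ δ|
  · rw [if_pos hx1, indicator_of_mem (by exact hx1), ← Real.rpow_mul (abs_nonneg x),
      ← Real.rpow_add (abs_pos.2 hx), mul_comm a]
  · rw [if_neg hx1, indicator_of_notMem (by exact hx1), Real.zero_rpow hp, mul_zero, ofReal_zero]

theorem lintegral_rpow_mul_truncPow_rpow {δ : ℤ} (hδ : δ = -1 ∨ δ = 1) {u a p ε : ℝ}
    (hp : 0 < p) (hε : 0 < ε) (h : u + p * a = -1 - δ * ε) :
    ∫⁻ x, ENNReal.ofReal (|x| ^ u * truncPow δ a x ^ p) = ENNReal.ofReal (2 / ε) := by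
  rw [lintegral_congr_ae ((Measure.ae_ne volume 0).mono fun x hx =>
      ofReal_rpow_mul_truncPow_rpow hp.ne' hx),
    lintegral_indicator (measurableSet_le measurable_const (by fun_prop)), h,
    setLIntegral_abs_rpow_le_abs_zpow hδ hε one_pos, Real.one_rpow, mul_one]

theorem ofReal_truncPow_mul_inv_mul_truncPow {δ : ℤ} {a b x t : ℝ} (hx : x ≠ 0) (ht : t ≠ 0) :
    ENNReal.ofReal (truncPow δ a x) * ENNReal.ofReal |x ^ δ|⁻¹ *
        ENNReal.ofReal (truncPow (-1) b (t / x ^ δ)) =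
      {x | max 1 |t| ≤ |x ^ δ|}.indicator
        (fun x => ENNReal.ofReal (|t| ^ b) * ENNReal.ofReal (|x| ^ (a - δ - δ * b))) x := by
  have hs : |x ^ δ| = |x| ^ (δ : ℝ) := by rw [Real.rpow_intCast, abs_zpow]
  have hinv : |(t / x ^ δ) ^ (-1 : ℤ)| = |x ^ δ| / |t| := by
    rw [zpow_neg_one, abs_inv, abs_div, inv_div]
  unfold truncPow
  simp only [hinv, one_le_div (abs_pos.2 ht)]
  by_cases hmem : max 1 |t| ≤ |x ^ δ|
  · obtain ⟨h1, h2⟩ := max_le_iff.1 hmem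
    rw [if_pos h1, if_pos h2, indicator_of_mem (by exact hmem), ← ofReal_mul (by positivity),
      ← ofReal_mul (by positivity), ← ofReal_mul (by positivity)]
    congr 1
    rw [abs_div, Real.div_rpow (abs_nonneg t) (abs_nonneg _), hs, ← Real.rpow_mul (abs_nonneg x),
      Real.rpow_sub (abs_pos.2 hx), Real.rpow_sub (abs_pos.2 hx)]
    ring
  · rw [indicator_of_notMem (by exact hmem)]
    rcases not_and_or.1 (mt max_le_iff.2 hmem) with h | h
    · rw [if_neg h, ofReal_zero, zero_mul, zero_mul]
    · rw [if_neg h, ofReal_zero, mul_zero]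

theorem lintegral_truncPow_mul_inv_mul_truncPow {δ : ℤ} (hδ : δ = -1 ∨ δ = 1) {a b ε t : ℝ}
    (hε : 0 < ε) (h : a - δ - δ * b = -1 - δ * ε) (ht : t ≠ 0) :
    ∫⁻ x, ENNReal.ofReal (truncPow δ a x) * ENNReal.ofReal |x ^ δ|⁻¹ *
        ENNReal.ofReal (truncPow (-1) b (t / x ^ δ)) =
      ENNReal.ofReal (2 / ε * (|t| ^ b * max 1 |t| ^ (-ε))) := by
  rw [lintegral_congr_ae ((Measure.ae_ne volume 0).mono fun x hx =>
      ofReal_truncPow_mul_inv_mul_truncPow hx ht),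
    lintegral_indicator (measurableSet_le measurable_const (by fun_prop)),
    lintegral_const_mul _ (by fun_prop), h,
    setLIntegral_abs_rpow_le_abs_zpow hδ hε (lt_max_of_lt_left one_pos),
    ← ofReal_mul (by positivity)]
  ring_nf

theorem lintegral_lintegral_truncPow {δ : ℤ} (hδ : δ = -1 ∨ δ = 1) {H : ℝ → ℝ}
    (hH : Measurable H) (hH0 : ∀ t, 0 ≤ H t) {a b ε : ℝ} (hε : 0 < ε)
    (h : a - δ - δ * b = -1 - δ * ε) :
    ∫⁻ y, ∫⁻ x, ENNReal.ofReal (H (x ^ δ * y) * truncPow δ a x * truncPow (-1) b y) =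
      ENNReal.ofReal (2 / ε) * ∫⁻ t, ENNReal.ofReal (H t * (|t| ^ b * max 1 |t| ^ (-ε))) := by
  have hsplit : ∀ x y, ENNReal.ofReal (H (x ^ δ * y) * truncPow δ a x * truncPow (-1) b y) =
      ENNReal.ofReal (H (x ^ δ * y)) * ENNReal.ofReal (truncPow δ a x) *
        ENNReal.ofReal (truncPow (-1) b y) := fun x y => by
    rw [ofReal_mul (mul_nonneg (hH0 _) (truncPow_nonneg _ _ _)), ofReal_mul (hH0 _)]
  simp only [hsplit]
  rw [lintegral_lintegral_mul_comp (φ := fun x => x ^ δ) (by fun_prop)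
      ((Measure.ae_ne volume 0).mono fun x hx => zpow_ne_zero δ hx) hH.ennreal_ofReal
      (measurable_truncPow _ _).ennreal_ofReal (measurable_truncPow _ _).ennreal_ofReal,
    ← lintegral_const_mul _ (by fun_prop)]
  refine lintegral_congr_ae ((Measure.ae_ne volume 0).mono fun t ht => ?_)
  dsimp only
  rw [lintegral_truncPow_mul_inv_mul_truncPow hδ hε h ht, ← ofReal_mul (hH0 t),
    ← ofReal_mul (by positivity)]
  ring_nf

theorem stmt18_general (p q σ : ℝ) (hp : 1 < p) (hpq : 1 / p + 1 / q = 1)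
    (δ : ℤ) (hδ : δ = -1 ∨ δ = 1)
    (H : ℝ → ℝ) (hH : Measurable H) (hH0 : ∀ t : ℝ, 0 ≤ H t)
    (c : ℝ)
    (hbd : ∀ f g : ℝ → ℝ, Measurable f → Measurable g →
      (∀ x : ℝ, 0 ≤ f x) → (∀ y : ℝ, 0 ≤ g y) →
      0 < (∫⁻ x : ℝ, ENNReal.ofReal (|x| ^ (p * (1 - (δ : ℝ) * σ) - 1) * f x ^ p)) →
      (∫⁻ x : ℝ, ENNReal.ofReal (|x| ^ (p * (1 - (δ : ℝ) * σ) - 1) * f x ^ p)) < ⊤ →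
      0 < (∫⁻ y : ℝ, ENNReal.ofReal (|y| ^ (q * (1 - σ) - 1) * g y ^ q)) →
      (∫⁻ y : ℝ, ENNReal.ofReal (|y| ^ (q * (1 - σ) - 1) * g y ^ q)) < ⊤ →
      (∫⁻ y : ℝ, ∫⁻ x : ℝ, ENNReal.ofReal (H (x ^ δ * y) * f x * g y))
        < ENNReal.ofReal c *
            (∫⁻ x : ℝ, ENNReal.ofReal (|x| ^ (p * (1 - (δ : ℝ) * σ) - 1) * f x ^ p)) ^ (1 / p) *
            (∫⁻ y : ℝ, ENNReal.ofReal (|y| ^ (q * (1 - σ) - 1) * g y ^ q)) ^ (1 / q)) :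
    (∫⁻ t : ℝ, ENNReal.ofReal (H t * |t| ^ (σ - 1))) ≤ ENNReal.ofReal c := by
  have hp0 : 0 < p := by linarith
  have hq0 : 0 < q := one_div_pos.1 (by linarith [(div_lt_one hp0).2 hp])
  have hkey : ∀ ε > 0, ∫⁻ t, ENNReal.ofReal (H t * (|t| ^ (σ - 1 + ε / q) * max 1 |t| ^ (-ε)))
      ≤ ENNReal.ofReal c := by
    intro ε hε
    have hεpq : ε / p + ε / q = ε := by
      rw [div_eq_mul_one_div ε p, div_eq_mul_one_div ε q, ← mul_add, hpq, mul_one]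
    have hf := lintegral_rpow_mul_truncPow_rpow hδ hp0 hε
      (u := p * (1 - δ * σ) - 1) (a := δ * σ - 1 - δ * (ε / p)) (by field_simp; ring)
    have hg := lintegral_rpow_mul_truncPow_rpow (Or.inl rfl) hq0 hε
      (u := q * (1 - σ) - 1) (a := σ - 1 + ε / q) (by push_cast; field_simp; ring)
    have hfg := lintegral_lintegral_truncPow hδ hH hH0 hε (a := δ * σ - 1 - δ * (ε / p))
      (b := σ - 1 + ε / q) (by linear_combination (-(δ : ℝ)) * hεpq)
    have hX0 : ENNReal.ofReal (2 / ε) ≠ 0 := (ENNReal.ofReal_pos.2 (by positivity)).ne'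
    have hbound := hbd _ _ (measurable_truncPow _ _) (measurable_truncPow _ _)
      (truncPow_nonneg _ _) (truncPow_nonneg _ _) (hf ▸ pos_iff_ne_zero.2 hX0)
      (hf ▸ ofReal_lt_top) (hg ▸ pos_iff_ne_zero.2 hX0) (hg ▸ ofReal_lt_top)
    rw [hf, hg, hfg, mul_assoc, ← ENNReal.rpow_add _ _ hX0 ofReal_ne_top, hpq, ENNReal.rpow_one,
      mul_comm (ENNReal.ofReal c)] at hbound
    exact ((ENNReal.mul_lt_mul_iff_right hX0 ofReal_ne_top).1 hbound).le
  refine lintegral_le_of_tendsto (l := 𝓝[>] (0 : ℝ))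
    (F := fun ε t => ENNReal.ofReal (H t * (|t| ^ (σ - 1 + ε / q) * max 1 |t| ^ (-ε))))
    (fun _ => by fun_prop) ?_
    (eventually_mem_nhdsWithin.mono fun ε (hε : ε ∈ Ioi 0) => hkey ε hε).frequently
  filter_upwards [Measure.ae_ne volume 0] with t ht
  exact (ENNReal.tendsto_ofReal ((tendsto_abs_rpow_add_div_mul_max_rpow_neg ht _ _).const_mul
    (H t))).mono_left nhdsWithin_le_nhds

/-- Best possibility of the constant `K(σ)` in the whole-plane Yang–Hilbert-type
inequality: any valid `c > 0` satisfies `c ≥ K(σ)`. -/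
theorem stmt18 (p q σ : ℝ) (hp : 1 < p) (hpq : 1 / p + 1 / q = 1)
    (δ : ℤ) (hδ : δ = -1 ∨ δ = 1)
    (H : ℝ → ℝ) (hH : Measurable H) (hH0 : ∀ t : ℝ, 0 ≤ H t)
    (hK0 : 0 < ∫⁻ t : ℝ, ENNReal.ofReal (H t * |t| ^ (σ - 1)))
    (hK1 : (∫⁻ t : ℝ, ENNReal.ofReal (H t * |t| ^ (σ - 1))) < ⊤)
    (c : ℝ) (hc : 0 < c)
    (hbd : ∀ f g : ℝ → ℝ, Measurable f → Measurable g →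
      (∀ x : ℝ, 0 ≤ f x) → (∀ y : ℝ, 0 ≤ g y) →
      0 < (∫⁻ x : ℝ, ENNReal.ofReal (|x| ^ (p * (1 - (δ : ℝ) * σ) - 1) * f x ^ p)) →
      (∫⁻ x : ℝ, ENNReal.ofReal (|x| ^ (p * (1 - (δ : ℝ) * σ) - 1) * f x ^ p)) < ⊤ →
      0 < (∫⁻ y : ℝ, ENNReal.ofReal (|y| ^ (q * (1 - σ) - 1) * g y ^ q)) →
      (∫⁻ y : ℝ, ENNReal.ofReal (|y| ^ (q * (1 - σ) - 1) * g y ^ q)) < ⊤ →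
      (∫⁻ y : ℝ, ∫⁻ x : ℝ, ENNReal.ofReal (H (x ^ δ * y) * f x * g y))
        < ENNReal.ofReal c *
            (∫⁻ x : ℝ, ENNReal.ofReal (|x| ^ (p * (1 - (δ : ℝ) * σ) - 1) * f x ^ p)) ^ (1 / p) *
            (∫⁻ y : ℝ, ENNReal.ofReal (|y| ^ (q * (1 - σ) - 1) * g y ^ q)) ^ (1 / q)) :
    (∫⁻ t : ℝ, ENNReal.ofReal (H t * |t| ^ (σ - 1))) ≤ ENNReal.ofReal c :=
  stmt18_general p q σ hp hpq δ hδ H hH hH0 c hbd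
end
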